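/- For κ ∈ ℝ let A_κ = κ·J − 1, and for c ≥ 0, σ ∈ ℝ and t ≥ 0 define the Ornstein–Uhlenbeck marginal covariance Σ_t(κ) = exp(t·A_κ) · (c·1) · (exp(t·A_κ))ᵀ + σ² ∫_0^t exp(s·A_κ) · (exp(s·A_κ))ᵀ ds. Then Σ_t(κ) = (c·e^{−2t} + (σ²/2)·(1 − e^{−2t})) · 1 for all t ≥ 0; in particular Σ_t(κ) does not depend on κ, so an Ornstein–Uhlenbeck process with drift matrix A_κ started from a rotation-invariant Gaussian initial law has time-marginals independent of κ (non-identifiability of the drift from snapshot observations). -/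

import Mathlib

open Matrix

/-- The 2×2 rotation generator `J = [[0, 1], [−1, 0]]`, satisfying `J² = −1`. -/
def Jmat : Matrix (Fin 2) (Fin 2) ℝ := !![0, 1; -1, 0]

lemma Jmat_transpose : Jmatᵀ = -Jmat := by
  ext i j; fin_cases i <;> fin_cases j <;> simp [Jmat]

lemma key (κ s : ℝ) :
    NormedSpace.exp (s • (κ • Jmat - 1)) * (NormedSpace.exp (s • (κ • Jmat - 1)))ᵀ
      = Real.exp (-2 * s) • (1 : Matrix (Fin 2) (Fin 2) ℝ) := by
  have htr : (s • (κ • Jmat - 1))ᵀ = s • ((-κ) • Jmat - 1) := by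
    simp [Matrix.transpose_smul, Matrix.transpose_sub, Jmat_transpose, smul_neg, neg_smul]
  have hcomm : Commute (s • (κ • Jmat - 1)) (s • ((-κ) • Jmat - 1)) := by
    have h1 : Commute (κ • Jmat) ((-κ) • Jmat) :=
      ((Commute.refl Jmat).smul_left κ).smul_right (-κ)
    have h2 : Commute (κ • Jmat - 1) ((-κ) • Jmat - 1) :=
      (h1.sub_right (Commute.one_right _)).sub_left
        ((Commute.one_left _).sub_right (Commute.one_left _))
    exact (h2.smul_left s).smul_right s
  have hsum : s • (κ • Jmat - 1) + s • ((-κ) • Jmat - 1)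
      = (-2 * s) • (1 : Matrix (Fin 2) (Fin 2) ℝ) := by
    rw [← smul_add]
    have : (κ • Jmat - 1) + ((-κ) • Jmat - 1) = (-2 : ℝ) • (1 : Matrix (Fin 2) (Fin 2) ℝ) := by
      rw [neg_smul]; module
    rw [this, smul_smul, mul_comm]
  have h := Matrix.exp_add_of_commute _ _ hcomm
  rw [hsum] at h
  rw [← Matrix.exp_transpose, htr, ← h, Matrix.smul_one_eq_diagonal,
    Matrix.exp_diagonal]
  have : (NormedSpace.exp fun _ : Fin 2 => -2 * s) = fun _ : Fin 2 => Real.exp (-2 * s) := by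
    rw [Pi.exp_def]; funext i; rw [← Real.exp_eq_exp_ℝ]
  rw [this, ← Matrix.smul_one_eq_diagonal]

example : True := trivial

lemma hI (t : ℝ) : (∫ s in (0:ℝ)..t, Real.exp (-2 * s)) = (1 - Real.exp (-2 * t)) / 2 := by
  rw [intervalIntegral.integral_comp_mul_left (fun x => Real.exp x) (by norm_num : (-2:ℝ) ≠ 0),
    integral_exp]
  norm_num
  ring

/-- The Ornstein–Uhlenbeck marginal covariance
`Σ_t(κ) = exp(t A_κ) (c·1) exp(t A_κ)ᵀ + σ² ∫₀ᵗ exp(s A_κ) exp(s A_κ)ᵀ ds`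
(with `A_κ = κ·J − 1` and the integral taken entrywise) equals
`(c e^{−2t} + (σ²/2)(1 − e^{−2t})) · 1` for all `t ≥ 0`; in particular it is independent of
`κ`, so an OU process with drift `A_κ` started from a rotation-invariant Gaussian law has
time-marginals independent of `κ`. -/
theorem ou_marginal_covariance_independent_of_kappa
    (κ c σ t : ℝ) (hc : 0 ≤ c) (ht : 0 ≤ t) :
    NormedSpace.exp (t • (κ • Jmat - 1))
        * (c • (1 : Matrix (Fin 2) (Fin 2) ℝ))
        * (NormedSpace.exp (t • (κ • Jmat - 1)))ᵀ
      + σ ^ 2 • Matrix.of (fun i j : Fin 2 => ∫ s in (0:ℝ)..t,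
          ((NormedSpace.exp (s • (κ • Jmat - 1))
            * (NormedSpace.exp (s • (κ • Jmat - 1)))ᵀ
            : Matrix (Fin 2) (Fin 2) ℝ) i j))
      = (c * Real.exp (-2 * t) + σ ^ 2 / 2 * (1 - Real.exp (-2 * t)))
          • (1 : Matrix (Fin 2) (Fin 2) ℝ) := by
  have h1 : NormedSpace.exp (t • (κ • Jmat - 1)) * (c • (1 : Matrix (Fin 2) (Fin 2) ℝ))
      * (NormedSpace.exp (t • (κ • Jmat - 1)))ᵀ
      = (c * Real.exp (-2 * t)) • (1 : Matrix (Fin 2) (Fin 2) ℝ) := by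
    rw [mul_smul_comm, mul_one, smul_mul_assoc, key, smul_smul, mul_comm]
  have h2 : Matrix.of (fun i j : Fin 2 => ∫ s in (0:ℝ)..t,
        ((NormedSpace.exp (s • (κ • Jmat - 1))
          * (NormedSpace.exp (s • (κ • Jmat - 1)))ᵀ : Matrix (Fin 2) (Fin 2) ℝ) i j))
      = ((1 - Real.exp (-2 * t)) / 2) • (1 : Matrix (Fin 2) (Fin 2) ℝ) := by
    ext i j
    simp only [Matrix.of_apply, key, Matrix.smul_apply, smul_eq_mul]
    rw [intervalIntegral.integral_mul_const, hI]
  rw [h1, h2, smul_smul, ← add_smul]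
  congr 1
  ring
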